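/- Let V be a finite type, c : V → V → ℝ≥0 a capacity function, S ⊆ V a subset, P ≥ 1 an integer, and s, t distinct vertices of V with s ∉ S and t ∉ S. Assume that c u v = 0 whenever u ∉ S and v ∉ S. Then the maximum s-t flow value of the P-fold replication c_P of S equals P times the maximum s-t flow value of c. -/

import Mathlib

/-!
Pushing a flow forward along a map of vertex sets (summing it over pairs of fibres) that
separates `s` from `t` preserves conservation and value. The `P` maps `V → V_P` sending `v ∈ S` to its `i`-th replica push a flow
of `c` to `P` flows of `c_P` whose sum is still within capacity, because `c` vanishes on the edges
outside `S`, the only edges the copies share; this sum has `P` times the value. Collapsing the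
replicas pushes a flow of `c_P` to a flow of `P • c` of the same value, and dividing by `P` gives
a flow of `c`.
-/

open Finset

attribute [local instance] Classical.propDecidable

noncomputable section

/-- `f` is an `s`-`t` flow for the capacity function `c`. -/
def IsFlow {W : Type*} [Fintype W] (c : W → W → NNReal) (s t : W) (f : W → W → ℝ) : Prop :=
  (∀ u v, 0 ≤ f u v ∧ f u v ≤ (c u v : ℝ)) ∧
  ∀ v, v ≠ s → v ≠ t → (∑ u, f u v) = (∑ w, f v w)

/-- The value of a flow `f` with source `s`. -/
def flowValue {W : Type*} [Fintype W] (f : W → W → ℝ) (s : W) : ℝ :=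
  (∑ w, f s w) - (∑ u, f u s)

/-- The maximum `s`-`t` flow value (the greatest value attained by an `s`-`t` flow). -/
def maxFlowValue {W : Type*} [Fintype W] (c : W → W → NNReal) (s t : W) : ℝ :=
  sSup {μ : ℝ | ∃ f, IsFlow c s t f ∧ flowValue f s = μ}

/-- The capacity function of the `P`-fold replication of the subset `S`. -/
def repCap {V : Type*} (c : V → V → NNReal) (S : Set V) (P : ℕ) :
    ({v : V // v ∉ S} ⊕ (↥S × Fin P)) → ({v : V // v ∉ S} ⊕ (↥S × Fin P)) → NNReal
  | Sum.inl u, Sum.inl v => c u.1 v.1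
  | Sum.inl u, Sum.inr (v, _) => c u.1 v.1
  | Sum.inr (v, _), Sum.inl u => c v.1 u.1
  | Sum.inr (u, i), Sum.inr (v, j) => if i = j then c u.1 v.1 else 0

section Pushforward

variable {W W' : Type*} [Fintype W]

def Conserves (s t : W) (f : W → W → ℝ) : Prop :=
  ∀ v, v ≠ s → v ≠ t → ∑ u, f u v = ∑ w, f v w

theorem Conserves.const_mul {s t : W} {f : W → W → ℝ} (hf : Conserves s t f) (a : ℝ) :
    Conserves s t (fun u v => a * f u v) := fun v hs ht => by
  simp only [← Finset.mul_sum, hf v hs ht]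

theorem Conserves.sum {ι : Type*} (I : Finset ι) {s t : W} {f : ι → W → W → ℝ}
    (hf : ∀ i ∈ I, Conserves s t (f i)) : Conserves s t (fun u v => ∑ i ∈ I, f i u v) :=
  fun v hs ht => by
    rw [Finset.sum_comm, Finset.sum_comm (s := univ)]
    exact Finset.sum_congr rfl fun i hi => hf i hi v hs ht

theorem flowValue_const_mul (a : ℝ) (f : W → W → ℝ) (s : W) :
    flowValue (fun u v => a * f u v) s = a * flowValue f s := by
  simp only [flowValue, ← Finset.mul_sum, mul_sub]

theorem flowValue_sum {ι : Type*} (I : Finset ι) (f : ι → W → W → ℝ) (s : W) :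
    flowValue (fun u v => ∑ i ∈ I, f i u v) s = ∑ i ∈ I, flowValue (f i) s := by
  simp only [flowValue, Finset.sum_sub_distrib]
  rw [Finset.sum_comm, Finset.sum_comm (s := univ)]

def pushforward (π : W → W') (f : W → W → ℝ) (x y : W') : ℝ :=
  ∑ u with π u = x, ∑ v with π v = y, f u v

theorem pushforward_nonneg {π : W → W'} {f : W → W → ℝ} (hf : ∀ u v, 0 ≤ f u v) (x y : W') :
    0 ≤ pushforward π f x y :=
  Finset.sum_nonneg fun u _ => Finset.sum_nonneg fun v _ => hf u v

theorem pushforward_mono {π : W → W'} {f g : W → W → ℝ} (hfg : ∀ u v, f u v ≤ g u v) (x y : W') :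
    pushforward π f x y ≤ pushforward π g x y :=
  Finset.sum_le_sum fun u _ => Finset.sum_le_sum fun v _ => hfg u v

variable [Fintype W']

theorem sum_pushforward_left (π : W → W') (f : W → W → ℝ) (y : W') :
    ∑ x, pushforward π f x y = ∑ v with π v = y, ∑ u, f u v := by
  simp only [pushforward]
  rw [Finset.sum_fiberwise _ π fun u => ∑ v with π v = y, f u v, Finset.sum_comm]

theorem sum_pushforward_right (π : W → W') (f : W → W → ℝ) (x : W') :
    ∑ y, pushforward π f x y = ∑ u with π u = x, ∑ v, f u v := by
  simp only [pushforward]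
  rw [Finset.sum_comm]
  exact Finset.sum_congr rfl fun u _ => Finset.sum_fiberwise _ π _

theorem Conserves.pushforward {s t : W} {f : W → W → ℝ} (hf : Conserves s t f) (π : W → W') :
    Conserves (π s) (π t) (pushforward π f) := fun x hs ht => by
  rw [sum_pushforward_left, sum_pushforward_right]
  refine Finset.sum_congr rfl fun v hv => hf v ?_ ?_ <;> rintro rfl <;> simp_all

theorem flowValue_pushforward {s t : W} {f : W → W → ℝ} (hf : Conserves s t f) {π : W → W'}
    (hst : π s ≠ π t) : flowValue (pushforward π f) (π s) = flowValue f s := by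
  rw [flowValue, sum_pushforward_left, sum_pushforward_right, ← Finset.sum_sub_distrib]
  refine Finset.sum_eq_single_of_mem s (by simp) fun u hu hus => ?_
  have hut : u ≠ t := by rintro rfl; simp_all
  rw [hf u hus hut, sub_self]

open Pointwise in
theorem maxFlowValue_eq_mul_of_lift_of_descend {c : W → W → NNReal} {c' : W' → W' → NNReal}
    {s t : W} {s' t' : W'} {a : ℝ} (ha : 0 ≤ a)
    (lift : ∀ f, IsFlow c s t f → ∃ F, IsFlow c' s' t' F ∧ flowValue F s' = a * flowValue f s)
    (descend : ∀ F, IsFlow c' s' t' F → ∃ f, IsFlow c s t f ∧ flowValue F s' = a * flowValue f s) :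
    maxFlowValue c' s' t' = a * maxFlowValue c s t := by
  have hvalues : {μ | ∃ F, IsFlow c' s' t' F ∧ flowValue F s' = μ} =
      a • {μ | ∃ f, IsFlow c s t f ∧ flowValue f s = μ} := by
    ext μ
    simp only [Set.mem_smul_set, Set.mem_ofPred_eq, smul_eq_mul]
    constructor
    · rintro ⟨F, hF, rfl⟩
      obtain ⟨f, hf, hval⟩ := descend F hF
      exact ⟨_, ⟨f, hf, rfl⟩, hval.symm⟩
    · rintro ⟨_, ⟨f, hf, rfl⟩, rfl⟩
      exact lift f hf
  rw [maxFlowValue, maxFlowValue, hvalues, Real.sSup_smul_of_nonneg ha, smul_eq_mul]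

end Pushforward

section Replication

variable {V : Type*} {S : Set V} {P : ℕ}

abbrev Replica (S : Set V) (P : ℕ) : Type _ := {v : V // v ∉ S} ⊕ (↥S × Fin P)

namespace Replica

def proj : Replica S P → V
  | Sum.inl v => v.1
  | Sum.inr (v, _) => v.1

def copy (S : Set V) (i : Fin P) (v : V) : Replica S P :=
  if h : v ∈ S then Sum.inr (⟨v, h⟩, i) else Sum.inl ⟨v, h⟩

theorem copy_of_notMem {i : Fin P} {v : V} (h : v ∉ S) : copy S i v = Sum.inl ⟨v, h⟩ :=
  dif_neg h

theorem copy_eq_inl_iff (i : Fin P) (v : V) (a : {v : V // v ∉ S}) :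
    copy S i v = Sum.inl a ↔ v = a.1 := by
  unfold copy
  split_ifs with h
  · simp only [false_iff]
    rintro rfl
    exact a.2 h
  · simp [Subtype.ext_iff]

theorem copy_eq_inr_iff (i j : Fin P) (v : V) (a : ↥S) :
    copy S i v = Sum.inr (a, j) ↔ v = a.1 ∧ i = j := by
  unfold copy
  split_ifs with h
  · simp [Subtype.ext_iff]
  · simp only [false_iff, not_and]
    rintro rfl
    exact absurd a.2 h

variable [Fintype V]

theorem sum_proj_eq (G : Replica S P → ℝ) (v : V) :
    ∑ x with proj x = v, G x =
      if h : v ∈ S then ∑ i, G (Sum.inr (⟨v, h⟩, i)) else G (Sum.inl ⟨v, h⟩) := by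
  rw [Finset.sum_filter, Fintype.sum_sum_type, Fintype.sum_prod_type]
  simp only [proj]
  split_ifs with h
  · have hl : ∀ a : {v : V // v ∉ S}, a.1 ≠ v := fun a ha => a.2 (ha ▸ h)
    have hr : ∀ a : S, a.1 = v ↔ a = ⟨v, h⟩ := fun a => by rw [Subtype.ext_iff]
    simp [hl, hr]
  · have hl : ∀ a : {v : V // v ∉ S}, a.1 = v ↔ a = ⟨v, h⟩ := fun a => by rw [Subtype.ext_iff]
    have hr : ∀ a : S, a.1 ≠ v := fun a ha => h (ha ▸ a.2)
    simp [hl, hr]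

end Replica

open Replica

variable [Fintype V]

theorem pushforward_proj_repCap (c : V → V → NNReal) (hzero : ∀ u v, u ∉ S → v ∉ S → c u v = 0)
    (u v : V) : pushforward proj (fun x y => (repCap c S P x y : ℝ)) u v = P * c u v := by
  unfold pushforward
  by_cases hu : u ∈ S <;> by_cases hv : v ∈ S <;>
    simp [sum_proj_eq, hu, hv, repCap, hzero, apply_ite NNReal.toReal]

theorem sum_pushforward_copy_repCap (c : V → V → NNReal)
    (hzero : ∀ u v, u ∉ S → v ∉ S → c u v = 0) (x y : Replica S P) :
    ∑ i, pushforward (copy S i) (fun u v => (c u v : ℝ)) x y = repCap c S P x y := by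
  rcases x with a | ⟨a, j⟩ <;> rcases y with b | ⟨b, k⟩ <;>
    simp only [pushforward, Finset.sum_filter, copy_eq_inl_iff, copy_eq_inr_iff, ite_and]
  -- the `P` copies of an edge outside `S` are the same edge
  · simp [repCap, hzero a.1 b.1 a.2 b.2]
  all_goals simp [repCap, Finset.sum_ite_eq', apply_ite NNReal.toReal, eq_comm]

theorem exists_isFlow_repCap_of_isFlow {c : V → V → NNReal}
    (hzero : ∀ u v, u ∉ S → v ∉ S → c u v = 0) {s t : V} (hst : s ≠ t) (hs : s ∉ S) (ht : t ∉ S)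
    {f : V → V → ℝ} (hf : IsFlow c s t f) :
    ∃ F, IsFlow (repCap c S P) (Sum.inl ⟨s, hs⟩) (Sum.inl ⟨t, ht⟩) F ∧
      flowValue F (Sum.inl ⟨s, hs⟩) = P * flowValue f s := by
  obtain ⟨hcap, hcons : Conserves s t f⟩ := hf
  have hcopy : ∀ i : Fin P, copy S i s = Sum.inl ⟨s, hs⟩ ∧ copy S i t = Sum.inl ⟨t, ht⟩ :=
    fun i => ⟨copy_of_notMem hs, copy_of_notMem ht⟩
  refine ⟨fun x y => ∑ i, pushforward (copy S i) f x y, ⟨fun x y => ⟨?_, ?_⟩, ?_⟩, ?_⟩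
  · exact Finset.sum_nonneg fun i _ => pushforward_nonneg (fun u v => (hcap u v).1) x y
  · rw [← sum_pushforward_copy_repCap c hzero]
    exact Finset.sum_le_sum fun i _ => pushforward_mono (fun u v => (hcap u v).2) x y
  · refine Conserves.sum _ fun i _ => ?_
    simpa only [hcopy i] using hcons.pushforward (copy S i)
  · have hvalue : ∀ i : Fin P, flowValue (pushforward (copy S i) f) (Sum.inl ⟨s, hs⟩) =
        flowValue f s := fun i => by
      rw [← (hcopy i).1]
      exact flowValue_pushforward hcons (by simp [hcopy i, hst])
    simp [flowValue_sum, hvalue]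

theorem exists_isFlow_of_isFlow_repCap {c : V → V → NNReal}
    (hzero : ∀ u v, u ∉ S → v ∉ S → c u v = 0) (hP : 0 < P) {s t : V} (hst : s ≠ t)
    (hs : s ∉ S) (ht : t ∉ S) {F : Replica S P → Replica S P → ℝ}
    (hF : IsFlow (repCap c S P) (Sum.inl ⟨s, hs⟩) (Sum.inl ⟨t, ht⟩) F) :
    ∃ f, IsFlow c s t f ∧ flowValue F (Sum.inl ⟨s, hs⟩) = P * flowValue f s := by
  obtain ⟨hcap, hcons : Conserves _ _ F⟩ := hF
  have hP' : (0 : ℝ) < P := Nat.cast_pos.mpr hP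
  refine ⟨fun u v => (P : ℝ)⁻¹ * pushforward proj F u v, ⟨fun u v => ⟨?_, ?_⟩, ?_⟩, ?_⟩
  · exact mul_nonneg (inv_nonneg.mpr hP'.le) (pushforward_nonneg (fun x y => (hcap x y).1) u v)
  · calc (P : ℝ)⁻¹ * pushforward proj F u v
        ≤ (P : ℝ)⁻¹ * pushforward proj (fun x y => (repCap c S P x y : ℝ)) u v := by
          gcongr
          exact pushforward_mono (fun x y => (hcap x y).2) u v
      _ = c u v := by rw [pushforward_proj_repCap c hzero, inv_mul_cancel_left₀ hP'.ne']
  · exact (hcons.pushforward proj).const_mul _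
  · rw [flowValue_const_mul, mul_inv_cancel_left₀ hP'.ne']
    exact (flowValue_pushforward (π := proj) hcons hst).symm

end Replication

theorem maxFlow_repCap_eq_P_mul_maxFlow {V : Type*} [Fintype V]
    (c : V → V → NNReal) (S : Set V) (P : ℕ) (hP : 1 ≤ P)
    (s t : V) (hst : s ≠ t) (hs : s ∉ S) (ht : t ∉ S)
    (hzero : ∀ u v, u ∉ S → v ∉ S → c u v = 0) :
    maxFlowValue (repCap c S P) (Sum.inl ⟨s, hs⟩) (Sum.inl ⟨t, ht⟩) =
      (P : ℝ) * maxFlowValue c s t :=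
  maxFlowValue_eq_mul_of_lift_of_descend (Nat.cast_nonneg P)
    (fun _ hf => exists_isFlow_repCap_of_isFlow hzero hst hs ht hf)
    (fun _ hF => exists_isFlow_of_isFlow_repCap hzero hP hst hs ht hF)

end
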